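/- (Theorem 2.2(v), stable sign) There exist K ∈ ℕ and a sign vector s ∈ {−1, 0, +1}ⁿ such that sign(x_i^k) = s_i for every i ∈ {1,…,n} and every k > K. -/

import Mathlib

open Filter
open scoped BigOperators InnerProductSpace

noncomputable section

/-- Real n-dimensional Euclidean space. -/
abbrev Vec (n : ℕ) := EuclideanSpace ℝ (Fin n)

/-- The smoothed objective `F(x, ε) = f(x) + λ ∑ᵢ (|xᵢ| + εᵢ)^p`. -/
def Fobj (n : ℕ) (p lam : ℝ) (f : Vec n → ℝ) (z : Vec n) (ε : Fin n → ℝ) : ℝ :=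
  f z + lam * ∑ i, (|z i| + ε i) ^ p

/-- The merit function `ψ(x, y, ε) = F(x, ε) + (β/2)‖x − y‖²`. -/
def psiObj (n : ℕ) (p lam β : ℝ) (f : Vec n → ℝ) (z y : Vec n) (ε : Fin n → ℝ) : ℝ :=
  Fobj n p lam f z ε + β / 2 * ‖z - y‖ ^ 2

/-- The weighted-ℓ₁ subproblem objective at iteration `k`:
`⟨∇f(yₖ), z⟩ + (β/2)‖z − yₖ‖² + λ ∑ᵢ wᵢᵏ |zᵢ|` with `wᵢᵏ = p(|xᵢᵏ| + εᵢᵏ)^{p−1}`. -/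
def subObj (n : ℕ) (p lam β : ℝ) (f : Vec n → ℝ) (xk yk : Vec n) (εk : Fin n → ℝ)
    (z : Vec n) : ℝ :=
  ⟪gradient f yk, z⟫_ℝ + β / 2 * ‖z - yk‖ ^ 2
    + lam * ∑ i, (p * (|xk i| + εk i) ^ (p - 1)) * |z i|

/-- All the hypotheses of the EIRL1 algorithm (Algorithm 1) together with
Assumption 2.1.  The convention `x⁻¹ = x⁰` is encoded through truncated
subtraction on ℕ (`x (k-1) = x 0` for `k = 0`). -/
structure EIRL1 (n : ℕ) (p lam β Lf μ αbar : ℝ) (f : Vec n → ℝ)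
    (x y : ℕ → Vec n) (ε : ℕ → Fin n → ℝ) (α : ℕ → ℝ) : Prop where
  hn : 1 ≤ n
  hp0 : 0 < p
  hp1 : p < 1
  hlam : 0 < lam
  hμ0 : 0 < μ
  hμ1 : μ < 1
  hLf : 0 ≤ Lf
  hβ : Lf < β
  hconv : ConvexOn ℝ Set.univ f
  hdiff : ContDiff ℝ 1 f
  hlip : ∀ a b, ‖gradient f a - gradient f b‖ ≤ Lf * ‖a - b‖
  hαbar0 : 0 ≤ αbar
  hαbar1 : αbar < 1
  hα0 : ∀ k, 0 ≤ α k
  hα1 : ∀ k, α k ≤ αbar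
  hε0 : ∀ i, 0 < ε 0 i
  hεpos : ∀ k i, 0 < ε (k + 1) i
  hεdec : ∀ k i, ε (k + 1) i ≤ μ * ε k i
  hy : ∀ k, y k = x k + α k • (x k - x (k - 1))
  hmin : ∀ k z, z ≠ x (k + 1) →
    subObj n p lam β f (x k) (y k) (ε k) (x (k + 1)) < subObj n p lam β f (x k) (y k) (ε k) z
  hlevel : Bornology.IsBounded {z : Vec n | Fobj n p lam f z 0 ≤ Fobj n p lam f (x 0) (ε 0)}

/-!
Let `Φₖ = ψ(xᵏ, xᵏ⁻¹, εᵏ)` with `β` replaced by `β ᾱ²`. Optimality of `xᵏ⁺¹` for the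
`β`-strongly convex subproblem, the descent lemma, convexity of `f` and the tangent-line bound for
the concave map `t ↦ t ^ p` combine to `Φₖ₊₁ + β (1 - ᾱ²) / 2 ‖xᵏ⁺¹ - xᵏ‖² ≤ Φₖ`. Hence the iterates
stay in the bounded level set and `‖xᵏ⁺¹ - xᵏ‖ → 0`.

The subproblem separates over coordinates; where `xᵏ⁺¹ᵢ ≠ 0` its first-order condition reads
`λ p (|xᵏᵢ| + εᵏᵢ) ^ (p - 1) = |∇ᵢ f(yᵏ) + β (xᵏ⁺¹ᵢ - yᵏᵢ)|`. The right side is bounded and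
`p - 1 < 0`, so `|xᵏᵢ| + εᵏᵢ ≥ δ` for a fixed `δ > 0`. Once `εᵏ < δ / 2` and the steps are shorter
than `δ / 2`, a coordinate that is nonzero at step `k + 1` had size at least `δ / 2` at step `k`
and kept its sign: zero coordinates stay zero and nonzero ones never change sign.
-/

open Set Topology

section InnerProductSpace

variable {E : Type*} [NormedAddCommGroup E] [InnerProductSpace ℝ E]

theorem hasDerivAt_comp_add_smul [CompleteSpace E] {f : E → ℝ} {a v : E} {t : ℝ}
    (hf : DifferentiableAt ℝ f (a + t • v)) :
    HasDerivAt (fun s : ℝ => f (a + s • v)) ⟪gradient f (a + t • v), v⟫_ℝ t := by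
  have hline : HasDerivAt (fun s : ℝ => a + s • v) v t := by
    simpa using ((hasDerivAt_id t).smul_const v).const_add a
  simpa [Function.comp_def] using hf.hasGradientAt.hasFDerivAt.comp_hasDerivAt t hline

theorem ConvexOn.add_inner_gradient_le [CompleteSpace E] {f : E → ℝ} (hconv : ConvexOn ℝ univ f)
    {a : E} (hf : DifferentiableAt ℝ f a) (b : E) :
    f a + ⟪gradient f a, b - a⟫_ℝ ≤ f b := by
  have hline : ConvexOn ℝ univ (fun s : ℝ => f (a + s • (b - a))) := by
    simpa [Function.comp_def, AffineMap.lineMap_apply, add_comm] using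
      hconv.comp_affineMap (AffineMap.lineMap a b)
  have hder : HasDerivAt (fun s : ℝ => f (a + s • (b - a))) ⟪gradient f a, b - a⟫_ℝ 0 := by
    simpa using hasDerivAt_comp_add_smul (v := b - a) (t := 0) (by simpa using hf)
  have := hline.le_slope_of_hasDerivAt (mem_univ 0) (mem_univ 1) one_pos hder
  simp only [slope_def_field, zero_smul, one_smul, add_zero, sub_zero, div_one,
    add_sub_cancel] at this
  linarith

theorem le_add_inner_gradient_add_sq_of_lipschitz [CompleteSpace E] {f : E → ℝ}
    (hf : Differentiable ℝ f) {L : ℝ} (hL : ∀ a b, ‖gradient f a - gradient f b‖ ≤ L * ‖a - b‖)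
    (a b : E) : f b ≤ f a + ⟪gradient f a, b - a⟫_ℝ + L / 2 * ‖b - a‖ ^ 2 := by
  set v := b - a
  set φ : ℝ → ℝ := fun t => f (a + t • v) - t * ⟪gradient f a, v⟫_ℝ - L / 2 * ‖v‖ ^ 2 * t ^ 2
  have hφ : ∀ t, HasDerivAt φ
      (⟪gradient f (a + t • v), v⟫_ℝ - ⟪gradient f a, v⟫_ℝ - L * ‖v‖ ^ 2 * t) t := by
    intro t
    refine (((hasDerivAt_comp_add_smul (a := a) (v := v) (hf _)).sub
      ((hasDerivAt_id t).mul_const ⟪gradient f a, v⟫_ℝ)).sub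
      ((hasDerivAt_pow 2 t).const_mul (L / 2 * ‖v‖ ^ 2))).congr_deriv ?_
    simp only [one_mul, Nat.cast_ofNat]
    ring
  have hanti : AntitoneOn φ (Icc 0 1) := by
    refine antitoneOn_of_deriv_nonpos (convex_Icc 0 1)
      (fun t _ => (hφ t).continuousAt.continuousWithinAt)
      (fun t _ => (hφ t).differentiableAt.differentiableWithinAt) fun t ht => ?_
    rw [interior_Icc] at ht
    rw [(hφ t).deriv, sub_nonpos, ← inner_sub_left]
    calc ⟪gradient f (a + t • v) - gradient f a, v⟫_ℝ
        ≤ ‖gradient f (a + t • v) - gradient f a‖ * ‖v‖ := real_inner_le_norm _ _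
      _ ≤ L * ‖t • v‖ * ‖v‖ := by gcongr; simpa using hL (a + t • v) a
      _ = L * ‖v‖ ^ 2 * t := by rw [norm_smul, Real.norm_of_nonneg ht.1.le]; ring
  have := hanti (left_mem_Icc.2 zero_le_one) (right_mem_Icc.2 zero_le_one) zero_le_one
  simp only [φ, zero_smul, one_smul, add_zero, zero_mul, sub_zero, one_mul, one_pow,
    mul_one, v, add_sub_cancel] at this
  linarith

theorem ConvexOn.add_sq_norm_sub_le_of_isMinOn {g : E → ℝ} (hg : ConvexOn ℝ univ g) {β : ℝ}
    {y a : E} (ha : IsMinOn (fun z => g z + β / 2 * ‖z - y‖ ^ 2) univ a) (z : E) :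
    g a + β / 2 * ‖a - y‖ ^ 2 + β / 2 * ‖z - a‖ ^ 2 ≤ g z + β / 2 * ‖z - y‖ ^ 2 := by
  -- compare `a` with the points `a + s • (z - a)` of the segment and let `s → 0⁺`
  have hseg : ∀ s ∈ Ioo (0 : ℝ) 1, (1 - s) * (β / 2 * ‖z - a‖ ^ 2)
      ≤ g z + β / 2 * ‖z - y‖ ^ 2 - (g a + β / 2 * ‖a - y‖ ^ 2) := by
    rintro s ⟨hs0, hs1⟩
    have hmin := ha (mem_univ (a + s • (z - a)))
    have hconv : g (a + s • (z - a)) ≤ (1 - s) * g a + s * g z := by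
      have h := hg.2 (mem_univ a) (mem_univ z) (by linarith : 0 ≤ 1 - s) hs0.le (by ring)
      rwa [show (1 - s) • a + s • z = a + s • (z - a) by module] at h
    have hnorm : ‖a + s • (z - a) - y‖ ^ 2
        = ‖a - y‖ ^ 2 + 2 * s * ⟪a - y, z - a⟫_ℝ + s ^ 2 * ‖z - a‖ ^ 2 := by
      rw [show a + s • (z - a) - y = (a - y) + s • (z - a) by abel, norm_add_sq_real,
        inner_smul_right, norm_smul, mul_pow, Real.norm_eq_abs, sq_abs]
      ring
    have hnorm' : ‖z - y‖ ^ 2 = ‖a - y‖ ^ 2 + 2 * ⟪a - y, z - a⟫_ℝ + ‖z - a‖ ^ 2 := by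
      rw [show z - y = (a - y) + (z - a) by abel, norm_add_sq_real]
    simp only [mem_ofPred_eq, hnorm] at hmin
    refine le_of_mul_le_mul_left ?_ hs0
    linear_combination hmin + hconv + (-(s * β / 2)) * hnorm'
  have hlim : Tendsto (fun s : ℝ => (1 - s) * (β / 2 * ‖z - a‖ ^ 2)) (𝓝[>] 0)
      (𝓝 (β / 2 * ‖z - a‖ ^ 2)) := by
    have : Continuous (fun s : ℝ => (1 - s) * (β / 2 * ‖z - a‖ ^ 2)) := by fun_prop
    simpa using this.continuousWithinAt (s := Ioi 0) (x := 0) |>.tendsto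
  have := le_of_tendsto hlim (eventually_of_mem (Ioo_mem_nhdsGT one_pos) hseg)
  linarith

end InnerProductSpace

theorem Real.rpow_le_rpow_add_mul_sub {p A B : ℝ} (hp0 : 0 ≤ p) (hp1 : p ≤ 1) (hA : 0 ≤ A)
    (hB : 0 < B) : A ^ p ≤ B ^ p + p * B ^ (p - 1) * (A - B) := by
  have h := rpow_one_add_le_one_add_mul_self
    (by linarith [div_nonneg hA hB.le] : (-1 : ℝ) ≤ A / B - 1) hp0 hp1
  rw [add_sub_cancel, Real.div_rpow hA hB.le, div_le_iff₀ (by positivity)] at h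
  rw [Real.rpow_sub_one hB.ne']
  calc A ^ p ≤ (1 + p * (A / B - 1)) * B ^ p := h
    _ = _ := by field_simp

theorem convexOn_mul_add_mul_abs (γ : ℝ) {c : ℝ} (hc : 0 ≤ c) :
    ConvexOn ℝ univ (fun t : ℝ => γ * t + c * |t|) :=
  ((LinearMap.mulLeft ℝ γ).convexOn convex_univ).add (convexOn_univ_norm.smul hc)

theorem abs_add_mul_sub_eq_of_isMinOn {γ c β y a : ℝ} (hc : 0 ≤ c)
    (ha : IsMinOn (fun t => γ * t + c * |t| + β / 2 * (t - y) ^ 2) univ a) (ha0 : a ≠ 0) :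
    |γ + β * (a - y)| = c := by
  have hder : HasDerivAt (fun t => γ * t + c * |t| + β / 2 * (t - y) ^ 2)
      (γ + c * SignType.sign a + β * (a - y)) a := by
    refine ((((hasDerivAt_id a).const_mul γ).add ((hasDerivAt_abs ha0).const_mul c)).add
      ((((hasDerivAt_id a).sub_const y).pow 2).const_mul (β / 2))).congr_deriv ?_
    simp only [id, mul_one, Nat.cast_ofNat]
    ring
  have hzero := (ha.isLocalMin univ_mem).hasDerivAt_eq_zero hder
  rw [show γ + β * (a - y) = -(c * SignType.sign a) by linarith, abs_neg, abs_mul,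
    abs_of_nonneg hc]
  rcases ha0.lt_or_gt with ha0 | ha0 <;> simp [ha0]

theorem isMinOn_apply_of_isMinOn_sum {ι : Type*} [Fintype ι] [DecidableEq ι] {q : ι → ℝ → ℝ}
    {a : EuclideanSpace ℝ ι} (ha : IsMinOn (fun z : EuclideanSpace ℝ ι => ∑ i, q i (z i)) univ a)
    (i : ι) : IsMinOn (q i) univ (a i) := by
  intro t _
  show q i (a i) ≤ q i t
  have hle := ha (mem_univ (WithLp.toLp 2 (Function.update a.ofLp i t)))
  simp only [mem_ofPred_eq, Function.apply_update (fun j => q j)] at hle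
  rw [Finset.sum_update_of_mem (Finset.mem_univ i),
    Finset.sum_eq_add_sum_sdiff_singleton_of_mem (Finset.mem_univ i)] at hle
  linarith

theorem tendsto_zero_of_succ_add_le {u d : ℕ → ℝ} (hd : ∀ k, 0 ≤ d k)
    (hu : ∀ k, u (k + 1) + d k ≤ u k) (hb : BddBelow (range u)) : Tendsto d atTop (𝓝 0) := by
  have hlim := tendsto_atTop_ciInf (antitone_nat_of_succ_le fun k => by linarith [hu k, hd k]) hb
  have hdiff : Tendsto (fun k => u k - u (k + 1)) atTop (𝓝 0) := by
    simpa using hlim.sub (hlim.comp (tendsto_add_atTop_nat 1))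
  exact squeeze_zero hd (fun k => by linarith [hu k]) hdiff

theorem Real.sign_eq_of_abs_sub_lt {a b : ℝ} (h : |a - b| < |b|) : Real.sign a = Real.sign b := by
  rcases lt_trichotomy b 0 with hb | rfl | hb
  · rw [abs_of_neg hb] at h
    rw [Real.sign_of_neg hb, Real.sign_of_neg (by linarith [le_abs_self (a - b)])]
  · rw [sub_zero, abs_zero] at h
    exact absurd h (abs_nonneg a).not_gt
  · rw [abs_of_pos hb] at h
    rw [Real.sign_of_pos hb, Real.sign_of_pos (by linarith [neg_abs_le (a - b)])]

theorem Real.exists_eventually_sign_eq {u : ℕ → ℝ} {δ : ℝ}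
    (hgap : ∀ᶠ k in atTop, u (k + 1) ≠ 0 → δ ≤ |u k|)
    (hstep : ∀ᶠ k in atTop, |u (k + 1) - u k| < δ) :
    ∃ c, ∀ᶠ k in atTop, Real.sign (u k) = c := by
  obtain ⟨K, hK⟩ := eventually_atTop.1 (hgap.and hstep)
  have hpersist : ∀ k ≥ K, u (k + 1) ≠ 0 → u k ≠ 0 ∧ Real.sign (u (k + 1)) = Real.sign (u k) := by
    intro k hk hne
    have hlt : |u (k + 1) - u k| < |u k| := (hK k hk).2.trans_le ((hK k hk).1 hne)
    exact ⟨abs_pos.mp ((abs_nonneg _).trans_lt hlt), Real.sign_eq_of_abs_sub_lt hlt⟩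
  by_cases hzero : ∃ k ≥ K, u k = 0
  · obtain ⟨k₀, hk₀, hu₀⟩ := hzero
    have hstay : ∀ k ≥ k₀, u k = 0 := by
      intro k hk
      induction k, hk using Nat.le_induction with
      | base => exact hu₀
      | succ k hk ih => exact not_not.mp fun hne => (hpersist k (by omega) hne).1 ih
    exact ⟨0, eventually_atTop.2 ⟨k₀, fun k hk => by rw [hstay k hk, Real.sign_zero]⟩⟩
  · push Not at hzero
    refine ⟨Real.sign (u K), eventually_atTop.2 ⟨K, fun k hk => ?_⟩⟩
    induction k, hk using Nat.le_induction with
    | base => rfl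
    | succ k hk ih => rw [(hpersist k hk (hzero _ (by omega))).2, ih]

theorem subObj_eq_sum (n : ℕ) (p lam β : ℝ) (f : Vec n → ℝ) (xk yk : Vec n) (εk : Fin n → ℝ)
    (z : Vec n) :
    subObj n p lam β f xk yk εk z = ∑ i, (gradient f yk i * z i
      + lam * (p * (|xk i| + εk i) ^ (p - 1)) * |z i| + β / 2 * (z i - yk i) ^ 2) := by
  simp only [subObj, PiLp.inner_apply, RCLike.inner_apply, conj_trivial,
    EuclideanSpace.real_norm_sq_eq, PiLp.sub_apply, Finset.mul_sum, ← Finset.sum_add_distrib]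
  exact Finset.sum_congr rfl fun i _ => by ring

theorem self_le_Fobj {n : ℕ} {p lam : ℝ} (hlam : 0 ≤ lam) (f : Vec n → ℝ) (z : Vec n)
    {ε : Fin n → ℝ} (hε : 0 ≤ ε) : f z ≤ Fobj n p lam f z ε := by
  have : 0 ≤ lam * ∑ i, (|z i| + ε i) ^ p :=
    mul_nonneg hlam (Finset.sum_nonneg fun i _ =>
      Real.rpow_nonneg (add_nonneg (abs_nonneg _) (hε i)) p)
  unfold Fobj
  linarith

theorem Fobj_mono {n : ℕ} {p lam : ℝ} (hp : 0 ≤ p) (hlam : 0 ≤ lam) (f : Vec n → ℝ) (z : Vec n)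
    {ε ε' : Fin n → ℝ} (hε : 0 ≤ ε) (hεε' : ε ≤ ε') :
    Fobj n p lam f z ε ≤ Fobj n p lam f z ε' := by
  unfold Fobj
  gcongr with i
  · exact add_nonneg (abs_nonneg _) (hε i)
  · exact hεε' i

namespace EIRL1

variable {n : ℕ} {p lam β Lf μ αbar : ℝ} {f : Vec n → ℝ} {x y : ℕ → Vec n}
  {ε : ℕ → Fin n → ℝ} {α : ℕ → ℝ}

theorem beta_pos (H : EIRL1 n p lam β Lf μ αbar f x y ε α) : 0 < β :=
  H.hLf.trans_lt H.hβ

theorem eps_pos (H : EIRL1 n p lam β Lf μ αbar f x y ε α) : ∀ k i, 0 < ε k i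
  | 0, i => H.hε0 i
  | k + 1, i => H.hεpos k i

theorem tendsto_eps (H : EIRL1 n p lam β Lf μ αbar f x y ε α) (i : Fin n) :
    Tendsto (fun k => ε k i) atTop (𝓝 0) := by
  have hgeom : ∀ k, ε k i ≤ μ ^ k * ε 0 i := by
    intro k
    induction k with
    | zero => simp
    | succ k ih =>
      calc ε (k + 1) i ≤ μ * ε k i := H.hεdec k i
        _ ≤ μ * (μ ^ k * ε 0 i) := mul_le_mul_of_nonneg_left ih H.hμ0.le
        _ = μ ^ (k + 1) * ε 0 i := by ring
  refine squeeze_zero (fun k => (H.eps_pos k i).le) hgeom ?_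
  simpa using (tendsto_pow_atTop_nhds_zero_of_lt_one H.hμ0.le H.hμ1).mul_const (ε 0 i)

theorem weight_nonneg (H : EIRL1 n p lam β Lf μ αbar f x y ε α) (k : ℕ) (i : Fin n) :
    0 ≤ lam * (p * (|x k i| + ε k i) ^ (p - 1)) := by
  have := H.eps_pos k i
  have := H.hlam
  have := H.hp0
  positivity

theorem isMinOn_coord (H : EIRL1 n p lam β Lf μ αbar f x y ε α) (k : ℕ) (i : Fin n) :
    IsMinOn (fun t => gradient f (y k) i * t + lam * (p * (|x k i| + ε k i) ^ (p - 1)) * |t|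
      + β / 2 * (t - y k i) ^ 2) univ (x (k + 1) i) := by
  have hmin : IsMinOn (subObj n p lam β f (x k) (y k) (ε k)) univ (x (k + 1)) := by
    refine isMinOn_univ_iff.2 fun z => ?_
    rcases eq_or_ne z (x (k + 1)) with rfl | hz
    · exact le_rfl
    · exact (H.hmin k z hz).le
  rw [funext (subObj_eq_sum n p lam β f (x k) (y k) (ε k))] at hmin
  exact isMinOn_apply_of_isMinOn_sum (q := fun i t => gradient f (y k) i * t
    + lam * (p * (|x k i| + ε k i) ^ (p - 1)) * |t| + β / 2 * (t - y k i) ^ 2) hmin i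

theorem weight_eq (H : EIRL1 n p lam β Lf μ αbar f x y ε α) {k : ℕ} {i : Fin n}
    (hne : x (k + 1) i ≠ 0) :
    lam * (p * (|x k i| + ε k i) ^ (p - 1))
      = |gradient f (y k) i + β * (x (k + 1) i - y k i)| :=
  (abs_add_mul_sub_eq_of_isMinOn (H.weight_nonneg k i) (H.isMinOn_coord k i) hne).symm

theorem subObj_add_sq_le (H : EIRL1 n p lam β Lf μ αbar f x y ε α) (k : ℕ) :
    subObj n p lam β f (x k) (y k) (ε k) (x (k + 1)) + β / 2 * ‖x (k + 1) - x k‖ ^ 2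
      ≤ subObj n p lam β f (x k) (y k) (ε k) (x k) := by
  rw [subObj_eq_sum, subObj_eq_sum, EuclideanSpace.real_norm_sq_eq, Finset.mul_sum,
    ← Finset.sum_add_distrib]
  refine Finset.sum_le_sum fun i _ => ?_
  have hmin : IsMinOn (fun t => (gradient f (y k) i * t
      + lam * (p * (|x k i| + ε k i) ^ (p - 1)) * |t|) + β / 2 * ‖t - y k i‖ ^ 2)
      univ (x (k + 1) i) := by
    simpa only [Real.norm_eq_abs, sq_abs] using H.isMinOn_coord k i
  have := (convexOn_mul_add_mul_abs (gradient f (y k) i)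
    (H.weight_nonneg k i)).add_sq_norm_sub_le_of_isMinOn hmin (x k i)
  simp only [Real.norm_eq_abs, sq_abs] at this
  rw [PiLp.sub_apply]
  linear_combination this

theorem sum_rpow_succ_add_le (H : EIRL1 n p lam β Lf μ αbar f x y ε α) (k : ℕ) :
    ∑ i, (|x (k + 1) i| + ε (k + 1) i) ^ p + ∑ i, p * (|x k i| + ε k i) ^ (p - 1) * |x k i|
      ≤ ∑ i, (|x k i| + ε k i) ^ p
        + ∑ i, p * (|x k i| + ε k i) ^ (p - 1) * |x (k + 1) i| := by
  simp only [← Finset.sum_add_distrib]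
  refine Finset.sum_le_sum fun i _ => ?_
  have hε : ε (k + 1) i ≤ ε k i :=
    (H.hεdec k i).trans (mul_le_of_le_one_left (H.eps_pos k i).le H.hμ1.le)
  have htangent := Real.rpow_le_rpow_add_mul_sub H.hp0.le H.hp1.le
    (add_nonneg (abs_nonneg (x (k + 1) i)) (H.eps_pos k i).le)
    (add_pos_of_nonneg_of_pos (abs_nonneg (x k i)) (H.eps_pos k i))
  have hmono : (|x (k + 1) i| + ε (k + 1) i) ^ p ≤ (|x (k + 1) i| + ε k i) ^ p := by
    gcongr
    · exact add_nonneg (abs_nonneg _) (H.eps_pos _ i).le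
    · exact H.hp0.le
  linarith

theorem norm_sub_extrapolation_le (H : EIRL1 n p lam β Lf μ αbar f x y ε α) (k : ℕ) :
    ‖x k - y k‖ ≤ αbar * ‖x k - x (k - 1)‖ := by
  rw [H.hy k, sub_add_cancel_left, norm_neg, norm_smul, Real.norm_of_nonneg (H.hα0 k)]
  gcongr
  exact H.hα1 k

theorem Fobj_succ_add_sq_le (H : EIRL1 n p lam β Lf μ αbar f x y ε α) (k : ℕ) :
    Fobj n p lam f (x (k + 1)) (ε (k + 1)) + β / 2 * ‖x (k + 1) - x k‖ ^ 2
      ≤ Fobj n p lam f (x k) (ε k) + β / 2 * (αbar ^ 2 * ‖x k - x (k - 1)‖ ^ 2) := by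
  have hsub := H.subObj_add_sq_le k
  have hdescent := le_add_inner_gradient_add_sq_of_lipschitz
    (H.hdiff.differentiable one_ne_zero) H.hlip (y k) (x (k + 1))
  have hconvex := H.hconv.add_inner_gradient_le
    ((H.hdiff.differentiable one_ne_zero) (y k)) (x k)
  have hpow := mul_le_mul_of_nonneg_left (H.sum_rpow_succ_add_le k) H.hlam.le
  have hextra : β / 2 * ‖x k - y k‖ ^ 2 ≤ β / 2 * (αbar * ‖x k - x (k - 1)‖) ^ 2 := by
    have := H.beta_pos
    gcongr
    exact H.norm_sub_extrapolation_le k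
  have hLβ : Lf / 2 * ‖x (k + 1) - y k‖ ^ 2 ≤ β / 2 * ‖x (k + 1) - y k‖ ^ 2 := by
    gcongr
    exact H.hβ.le
  rw [inner_sub_right] at hdescent hconvex
  unfold subObj at hsub
  unfold Fobj
  linear_combination hsub + hdescent + hconvex + hpow + hextra + hLβ

theorem decrease_coeff_pos (H : EIRL1 n p lam β Lf μ αbar f x y ε α) :
    0 < β * (1 - αbar ^ 2) / 2 := by
  have := H.beta_pos
  have : αbar ^ 2 < 1 := by nlinarith [H.hαbar0, H.hαbar1]
  have : 0 < 1 - αbar ^ 2 := by linarith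
  positivity

-- `x (k + 1 - 1)` is the shape `Φ (k + 1) + dₖ ≤ Φ k` needed by `tendsto_zero_of_succ_add_le`.
theorem psiObj_succ_add_sq_le (H : EIRL1 n p lam β Lf μ αbar f x y ε α) (k : ℕ) :
    psiObj n p lam (β * αbar ^ 2) f (x (k + 1)) (x (k + 1 - 1)) (ε (k + 1))
        + β * (1 - αbar ^ 2) / 2 * ‖x (k + 1) - x k‖ ^ 2
      ≤ psiObj n p lam (β * αbar ^ 2) f (x k) (x (k - 1)) (ε k) := by
  have := H.Fobj_succ_add_sq_le k
  simp only [psiObj, Nat.add_sub_cancel]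
  linear_combination this

theorem Fobj_le_psiObj (H : EIRL1 n p lam β Lf μ αbar f x y ε α) (k : ℕ) :
    Fobj n p lam f (x k) (ε k) ≤ psiObj n p lam (β * αbar ^ 2) f (x k) (x (k - 1)) (ε k) :=
  le_add_of_nonneg_right (by have := H.beta_pos; positivity)

theorem psiObj_le_Fobj_zero (H : EIRL1 n p lam β Lf μ αbar f x y ε α) (k : ℕ) :
    psiObj n p lam (β * αbar ^ 2) f (x k) (x (k - 1)) (ε k) ≤ Fobj n p lam f (x 0) (ε 0) := by
  have hanti : Antitone fun k => psiObj n p lam (β * αbar ^ 2) f (x k) (x (k - 1)) (ε k) :=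
    antitone_nat_of_succ_le fun k => (le_add_of_nonneg_right
      (by have := H.decrease_coeff_pos; positivity)).trans (H.psiObj_succ_add_sq_le k)
  simpa [psiObj] using hanti (Nat.zero_le k)

theorem exists_norm_le (H : EIRL1 n p lam β Lf μ αbar f x y ε α) : ∃ R, ∀ k, ‖x k‖ ≤ R := by
  obtain ⟨R, hR⟩ := isBounded_iff_forall_norm_le.1 H.hlevel
  refine ⟨R, fun k => hR _ ?_⟩
  calc Fobj n p lam f (x k) 0 ≤ Fobj n p lam f (x k) (ε k) :=
        Fobj_mono H.hp0.le H.hlam.le f (x k) le_rfl fun i => (H.eps_pos k i).le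
    _ ≤ _ := (H.Fobj_le_psiObj k).trans (H.psiObj_le_Fobj_zero k)

theorem tendsto_norm_sub (H : EIRL1 n p lam β Lf μ αbar f x y ε α) :
    Tendsto (fun k => ‖x (k + 1) - x k‖) atTop (𝓝 0) := by
  obtain ⟨R, hR⟩ := H.exists_norm_le
  have hbdd : BddBelow (range fun k =>
      psiObj n p lam (β * αbar ^ 2) f (x k) (x (k - 1)) (ε k)) := by
    refine ⟨f 0 - ‖gradient f 0‖ * R, ?_⟩
    rintro _ ⟨k, rfl⟩
    have hconvex := H.hconv.add_inner_gradient_le ((H.hdiff.differentiable one_ne_zero) 0) (x k)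
    have hinner : -(‖gradient f 0‖ * R) ≤ ⟪gradient f 0, x k - 0⟫_ℝ := by
      rw [sub_zero, neg_le]
      calc -⟪gradient f 0, x k⟫_ℝ ≤ ‖gradient f 0‖ * ‖x k‖ :=
            (neg_le_abs _).trans (abs_real_inner_le_norm _ _)
        _ ≤ ‖gradient f 0‖ * R := by gcongr; exact hR k
    linarith [self_le_Fobj (p := p) H.hlam.le f (x k) fun i => (H.eps_pos k i).le,
      H.Fobj_le_psiObj k]
  have hdecrease := tendsto_zero_of_succ_add_le
    (fun k => by have := H.decrease_coeff_pos; positivity) H.psiObj_succ_add_sq_le hbdd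
  have hsq : Tendsto (fun k => ‖x (k + 1) - x k‖ ^ 2) atTop (𝓝 0) := by
    simpa using (hdecrease.div_const _).congr fun k =>
      mul_div_cancel_left₀ _ H.decrease_coeff_pos.ne'
  simpa [Real.sqrt_sq (norm_nonneg _)] using hsq.sqrt

theorem exists_norm_stationarity_le (H : EIRL1 n p lam β Lf μ αbar f x y ε α) :
    ∃ C, ∀ k, ‖gradient f (y k) + β • (x (k + 1) - y k)‖ ≤ C := by
  obtain ⟨R, hR⟩ := H.exists_norm_le
  have hyR : ∀ k, ‖y k‖ ≤ 3 * R := fun k => by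
    calc ‖y k‖ ≤ ‖x k‖ + ‖x k - y k‖ := by simpa using norm_sub_le (x k) (x k - y k)
      _ ≤ ‖x k‖ + ‖x k - x (k - 1)‖ := by
        gcongr
        exact (H.norm_sub_extrapolation_le k).trans
          (mul_le_of_le_one_left (norm_nonneg _) H.hαbar1.le)
      _ ≤ ‖x k‖ + (‖x k‖ + ‖x (k - 1)‖) := by grw [norm_sub_le]
      _ ≤ 3 * R := by linarith [hR k, hR (k - 1)]
  refine ⟨‖gradient f 0‖ + Lf * (3 * R) + β * (R + 3 * R), fun k => ?_⟩
  have hβ := H.beta_pos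
  have hgrad : ‖gradient f (y k)‖ ≤ ‖gradient f 0‖ + Lf * (3 * R) :=
    calc ‖gradient f (y k)‖ ≤ ‖gradient f 0‖ + ‖gradient f (y k) - gradient f 0‖ :=
          norm_le_norm_add_norm_sub' _ _
      _ ≤ ‖gradient f 0‖ + Lf * (3 * R) := by
          grw [H.hlip (y k) 0, sub_zero, hyR k]
          exact H.hLf
  calc ‖gradient f (y k) + β • (x (k + 1) - y k)‖
      ≤ ‖gradient f (y k)‖ + β * ‖x (k + 1) - y k‖ := by
        grw [norm_add_le, norm_smul, Real.norm_of_nonneg hβ.le]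
    _ ≤ ‖gradient f 0‖ + Lf * (3 * R) + β * (R + 3 * R) := by
        grw [hgrad, norm_sub_le, hR, hyR]

theorem exists_gap (H : EIRL1 n p lam β Lf μ αbar f x y ε α) :
    ∃ δ > 0, ∀ k i, x (k + 1) i ≠ 0 → δ ≤ |x k i| + ε k i := by
  obtain ⟨C, hC⟩ := H.exists_norm_stationarity_le
  have hlp : 0 < lam * p := mul_pos H.hlam H.hp0
  set M := max C 1 / (lam * p)
  have hM : 0 < M := by positivity
  refine ⟨M ^ (p - 1)⁻¹, by positivity, fun k i hne => ?_⟩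
  have hB : 0 < |x k i| + ε k i := add_pos_of_nonneg_of_pos (abs_nonneg _) (H.eps_pos k i)
  rw [Real.rpow_inv_le_iff_of_neg hM hB (by linarith [H.hp1]), le_div_iff₀ hlp]
  calc (|x k i| + ε k i) ^ (p - 1) * (lam * p) = lam * (p * (|x k i| + ε k i) ^ (p - 1)) := by
        ring
    _ = |gradient f (y k) i + β * (x (k + 1) i - y k i)| := H.weight_eq hne
    _ ≤ ‖gradient f (y k) + β • (x (k + 1) - y k)‖ := by
        simpa using PiLp.norm_apply_le (gradient f (y k) + β • (x (k + 1) - y k)) i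
    _ ≤ max C 1 := (hC k).trans (le_max_left _ _)

end EIRL1

/-- Theorem 2.2(v): stable sign.  After some iteration `K` all iterates carry
the same sign vector `s ∈ {−1, 0, +1}ⁿ`. -/
theorem stmt_10 (n : ℕ) (p lam β Lf μ αbar : ℝ) (f : Vec n → ℝ)
    (x y : ℕ → Vec n) (ε : ℕ → Fin n → ℝ) (α : ℕ → ℝ)
    (H : EIRL1 n p lam β Lf μ αbar f x y ε α) :
    ∃ (K : ℕ) (s : Fin n → ℝ),
      (∀ i, s i = -1 ∨ s i = 0 ∨ s i = 1) ∧
      ∀ k > K, ∀ i, Real.sign (x k i) = s i := by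
  obtain ⟨δ, hδ, hgap⟩ := H.exists_gap
  have hstep : ∀ᶠ k in atTop, ‖x (k + 1) - x k‖ < δ / 2 :=
    H.tendsto_norm_sub.eventually_lt_const (half_pos hδ)
  have hsign : ∀ i, ∃ c, ∀ᶠ k in atTop, Real.sign (x k i) = c := fun i =>
    Real.exists_eventually_sign_eq (δ := δ / 2)
      (((H.tendsto_eps i).eventually_lt_const (half_pos hδ)).mono fun k hk hne => by
        linarith [hgap k i hne])
      (hstep.mono fun k hk => lt_of_le_of_lt (by
        simpa using PiLp.norm_apply_le (x (k + 1) - x k) i) hk)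
  choose s hs using hsign
  obtain ⟨K, hK⟩ := eventually_atTop.1 (eventually_all.2 hs)
  exact ⟨K, s, fun i => hK K le_rfl i ▸ Real.sign_apply_eq _, fun k hk i => hK k hk.le i⟩
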